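/- In a directed graph consisting of a start node s with edges s→t1, t1→t2, t2→t3, t3→g, and t1→t4, t4→t5, t5→g (all edges of cost 1, visibility being the identity function), every tuple (D, s, g, t_i) for i ∈ {1,...,5} is a (3, 1, ∞)-Anonymizable Tuple, but no single path planner can return a (3, 1, ∞)-Anonymized Path for all five transit candidates simultaneously. -/

import Mathlib

open scoped ENNReal

structure Domain (N : Type*) where
  E : N → N → Prop
  T : Set N
  c : N → N → ℝ
  c_nonneg : ∀ a b, 0 ≤ c a b
  v : N → Set N

variable {N : Type*}

/-- A path is a nonempty sequence of nodes where consecutive nodes are joined by edges. -/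
def IsPath (D : Domain N) (π : List N) : Prop :=
  π ≠ [] ∧ π.Chain' D.E

def startsAt (π : List N) (a : N) : Prop := π.head? = some a

def endsAt (π : List N) (b : N) : Prop := π.getLast? = some b

/-- A path covers a node `n` if some node on the path sees `n`. -/
def Covers (D : Domain N) (π : List N) (n : N) : Prop :=
  ∃ x ∈ π, n ∈ D.v x

/-- The cost of a path: the sum of the costs of its consecutive edges. -/
def cost (D : Domain N) : List N → ℝ
  | [] => 0
  | [_] => 0
  | a :: b :: rest => D.c a b + cost D (b :: rest)

/-- Shortest-path distance (`∞` if there is no path). -/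
noncomputable def spDist (D : Domain N) (a b : N) : ℝ≥0∞ :=
  ⨅ (π : List N) (_ : IsPath D π ∧ startsAt π a ∧ endsAt π b),
    ENNReal.ofReal (cost D π)

/-- A path planner maps (domain, start, goal, transit point) to a path or Failure (`none`). -/
abbrev Planner (N : Type*) := Domain N → N → N → N → Option (List N)

/-- A feasible solution to a PPVT: a path from `s` to `g` covering `t`. -/
def Feasible (D : Domain N) (s g t : N) (π : List N) : Prop :=
  IsPath D π ∧ startsAt π s ∧ endsAt π g ∧ Covers D π t

/-- A planner is sound if any returned path is a feasible PPVT solution. -/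
def SoundPlanner (D : Domain N) (A : Planner N) : Prop :=
  ∀ s g t π, A D s g t = some π → Feasible D s g t π

/-- The prefix `π|_m` consisting of the first `m` nodes (the whole path if `m = ∞`
or `m` exceeds the length). -/
def takeE (m : ℕ∞) (π : List N) : List N :=
  if m = ⊤ then π else π.take m.toNat

/-- `A (D, s, g, t)` is a `(k, ℓ, m)`-Anonymized Path: there is a set `S` of at least `k`
transit candidates, pairwise shortest-path distance `≥ ℓ`, whose planner outputs all agree
with the output for `t` on the first `m` nodes. -/
def IsAnonymized (D : Domain N) (A : Planner N) (s g t : N)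
    (k : ℕ) (ℓ : ℝ) (m : ℕ∞) : Prop :=
  ∃ (π : List N) (S : Finset N), A D s g t = some π ∧ ↑S ⊆ D.T ∧
    k ≤ S.card ∧
    (∀ i ∈ S, ∀ j ∈ S, i ≠ j → ENNReal.ofReal ℓ ≤ spDist D i j) ∧
    (∀ t' ∈ S, ∃ π', A D s g t' = some π' ∧ takeE m π' = takeE m π)

/-- `(D, s, g, t)` is a `(k, ℓ, m)`-Anonymizable Tuple: some sound planner outputs a
`(k, ℓ, m)`-Anonymized Path for it. -/
def IsAnonymizableTuple (D : Domain N) (s g t : N) (k : ℕ) (ℓ : ℝ) (m : ℕ∞) : Prop :=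
  t ∈ D.T ∧ s ≠ t ∧ g ≠ t ∧
    ∃ A : Planner N, SoundPlanner D A ∧ IsAnonymized D A s g t k ℓ m

/-- A planner satisfies `(k, ℓ, m)`-Anonymity for `D` if it returns a `(k, ℓ, m)`-Anonymized
Path for every `(k, ℓ, m)`-Anonymizable Tuple in `D`. -/
def SatisfiesAnonymity (D : Domain N) (A : Planner N) (k : ℕ) (ℓ : ℝ) (m : ℕ∞) : Prop :=
  ∀ s g t, IsAnonymizableTuple D s g t k ℓ m → IsAnonymized D A s g t k ℓ m

def Undirected (D : Domain N) : Prop := ∀ i j, D.E i j → D.E j i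

/-- Concatenation of two paths sharing an endpoint (the shared node appears once). -/
def concatP (πa πb : List N) : List N := πa ++ πb.tail

inductive V where
  | s | t1 | t2 | t3 | t4 | t5 | g
deriving DecidableEq

open V in
def D3 : Domain V where
  E a b := (a = s ∧ b = t1) ∨ (a = t1 ∧ b = t2) ∨ (a = t2 ∧ b = t3) ∨
    (a = t3 ∧ b = g) ∨ (a = t1 ∧ b = t4) ∨ (a = t4 ∧ b = t5) ∨ (a = t5 ∧ b = g)
  T := {t1, t2, t3, t4, t5}
  c _ _ := 1
  c_nonneg _ _ := zero_le_one
  v n := {n}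


/-
Both `s`–`g` paths pass through `t1` and through exactly three transit candidates. With
`m = ∞` all members of an anonymity set receive the very same path, and that path covers
each of them, so the anonymity set of any transit candidate is exactly the set of transit
candidates on its path, which contains `t1`. An anonymizing planner would therefore give
`t2` and `t4` the same path as `t1`, but no `s`–`g` path covers both `t2` and `t4`.
-/

lemma cost_nonneg (D : Domain N) : ∀ π : List N, 0 ≤ cost D π
  | [] => le_rfl
  | [_] => le_rfl
  | a :: b :: rest => add_nonneg (D.c_nonneg a b) (cost_nonneg D (b :: rest))

lemma ofReal_le_spDist {D : Domain N} {ℓ : ℝ} (hℓ : ∀ a b, D.E a b → ℓ ≤ D.c a b)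
    {i j : N} (hij : i ≠ j) : ENNReal.ofReal ℓ ≤ spDist D i j := by
  refine le_iInf₂ fun π ⟨⟨hne, hchain⟩, hi, hj⟩ => ?_
  rcases π with _ | ⟨a, _ | ⟨b, rest⟩⟩
  · exact absurd rfl hne
  · simp only [startsAt, endsAt, List.head?, List.getLast?_singleton, Option.some.injEq] at hi hj
    exact absurd (hi.symm.trans hj) hij
  · have hab : D.E a b := (List.isChain_cons_cons.1 hchain).1
    exact ENNReal.ofReal_le_ofReal
      (le_add_of_le_of_nonneg (hℓ a b hab) (cost_nonneg D (b :: rest)))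

lemma takeE_top (π : List N) : takeE ⊤ π = π := if_pos rfl

lemma covers_iff_mem {D : Domain N} (hv : ∀ n, D.v n = {n}) {π : List N} {n : N} :
    Covers D π n ↔ n ∈ π := by
  simp [Covers, hv]

open Classical in
noncomputable def pathPlanner (π : List N) : Planner N :=
  fun D s g t => if Feasible D s g t π then some π else none

lemma soundPlanner_pathPlanner (D : Domain N) (π : List N) : SoundPlanner D (pathPlanner π) := by
  intro s g t π' h
  unfold pathPlanner at h
  split_ifs at h with hπ
  exact Option.some_injective _ h ▸ hπ

lemma isAnonymized_pathPlanner {D : Domain N} {π : List N} {s g t : N} {k : ℕ} {ℓ : ℝ}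
    {m : ℕ∞} {S : Finset N} (hST : ↑S ⊆ D.T) (hk : k ≤ S.card)
    (hℓ : ∀ i ∈ S, ∀ j ∈ S, i ≠ j → ENNReal.ofReal ℓ ≤ spDist D i j)
    (ht : Feasible D s g t π) (hS : ∀ t' ∈ S, Feasible D s g t' π) :
    IsAnonymized D (pathPlanner π) s g t k ℓ m :=
  ⟨π, S, if_pos ht, hST, hk, hℓ, fun t' ht' => ⟨π, if_pos (hS t' ht'), rfl⟩⟩

open V

def pathA : List V := [s, t1, t2, t3, g]

def pathB : List V := [s, t1, t4, t5, g]

def transits : Finset V := {t1, t2, t3, t4, t5}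

lemma coe_transits : (transits : Set V) = D3.T := by
  simp [transits, D3]

lemma eq_pathA_or_pathB {π : List V} (hπ : IsPath D3 π) (hs : startsAt π s) (hg : endsAt π g) :
    π = pathA ∨ π = pathB := by
  -- `g` has no out-edges, so a path from `s` has at most five nodes.
  obtain ⟨hne, hchain⟩ := hπ
  replace hchain : List.IsChain D3.E π := hchain
  rcases π with _ | ⟨a, _ | ⟨b, _ | ⟨c, _ | ⟨d, _ | ⟨e, _ | ⟨f, rest⟩⟩⟩⟩⟩⟩ <;>
    simp_all [startsAt, endsAt, D3, pathA, pathB] <;> grind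

lemma feasible_D3_iff {π : List V} {t : V} :
    Feasible D3 s g t π ↔ (π = pathA ∨ π = pathB) ∧ t ∈ π := by
  rw [Feasible, covers_iff_mem fun _ => rfl]
  constructor
  · rintro ⟨hπ, hs, hg, ht⟩
    exact ⟨eq_pathA_or_pathB hπ hs hg, ht⟩
  · rintro ⟨rfl | rfl, ht⟩ <;>
      exact ⟨⟨by simp [pathA, pathB], (by simp [pathA, pathB, D3] : List.IsChain D3.E _)⟩,
        rfl, rfl, ht⟩

lemma one_le_spDist_D3 {i j : V} (hij : i ≠ j) : ENNReal.ofReal 1 ≤ spDist D3 i j :=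
  ofReal_le_spDist (fun _ _ _ => le_rfl) hij

def transitsOn (π : List V) : Finset V := transits.filter (· ∈ π)

lemma transitsOn_spec {π : List V} (hπ : π = pathA ∨ π = pathB) :
    (transitsOn π).card = 3 ∧ t1 ∈ transitsOn π := by
  rcases hπ with rfl | rfl <;> decide

lemma isAnonymizableTuple_D3 {t : V} (ht : t ∈ D3.T) : IsAnonymizableTuple D3 s g t 3 1 ⊤ := by
  rw [← coe_transits, Finset.mem_coe] at ht
  have htransit : ∀ t ∈ transits, s ≠ t ∧ g ≠ t ∧ (t ∈ pathA ∨ t ∈ pathB) := by decide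
  obtain ⟨hs, hg, htAB⟩ := htransit t ht
  obtain ⟨π, hπ, htπ⟩ : ∃ π, (π = pathA ∨ π = pathB) ∧ t ∈ π :=
    htAB.elim (⟨pathA, .inl rfl, ·⟩) (⟨pathB, .inr rfl, ·⟩)
  refine ⟨coe_transits ▸ ht, hs, hg, pathPlanner π, soundPlanner_pathPlanner D3 π,
    isAnonymized_pathPlanner (S := transitsOn π)
      (coe_transits ▸ Finset.coe_subset.2 (Finset.filter_subset _ _))
      (transitsOn_spec hπ).1.ge (fun i _ j _ hij => one_le_spDist_D3 hij)
      (feasible_D3_iff.2 ⟨hπ, htπ⟩)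
      fun t' ht' => feasible_D3_iff.2 ⟨hπ, (Finset.mem_filter.1 ht').2⟩⟩

lemma planner_t1_eq_of_isAnonymized {A : Planner V} (hA : SoundPlanner D3 A) {t : V}
    (ht : IsAnonymized D3 A s g t 3 1 ⊤) : A D3 s g t1 = A D3 s g t := by
  obtain ⟨π, S, hout, hST, hcard, -, hsame⟩ := ht
  have hS : ∀ t' ∈ S, A D3 s g t' = some π := fun t' ht' => by
    obtain ⟨π', hπ', hπ'π⟩ := hsame t' ht'
    rw [takeE_top, takeE_top] at hπ'π
    rwa [← hπ'π]
  have hπ : π = pathA ∨ π = pathB := (feasible_D3_iff.1 (hA _ _ _ _ hout)).1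
  have hS_sub : S ⊆ transitsOn π := fun t' ht' =>
    Finset.mem_filter.2 ⟨by simpa [← coe_transits] using hST ht',
      (feasible_D3_iff.1 (hA _ _ _ _ (hS t' ht'))).2⟩
  have hS_eq : S = transitsOn π :=
    Finset.eq_of_subset_of_card_le hS_sub ((transitsOn_spec hπ).1 ▸ hcard)
  rw [hout, hS t1 (hS_eq ▸ (transitsOn_spec hπ).2)]

open V in
/-- in the directed counterexample graph, every tuple is
`(3, 1, ∞)`-Anonymizable, but no single (sound) planner returns a `(3, 1, ∞)`-Anonymized
Path for all five transit candidates simultaneously. -/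
theorem stmt3 :
    (∀ t ∈ D3.T, IsAnonymizableTuple D3 s g t 3 1 ⊤) ∧
    ¬ ∃ A : Planner V, SoundPlanner D3 A ∧
        ∀ t ∈ D3.T, IsAnonymized D3 A s g t 3 1 ⊤ := by
  refine ⟨fun t ht => isAnonymizableTuple_D3 ht, ?_⟩
  rintro ⟨A, hA, hanon⟩
  have ht2 := hanon t2 (by simp [D3])
  have ht4 := hanon t4 (by simp [D3])
  have ⟨π, _, hout2, _⟩ := ht2
  have hout4 : A D3 s g t4 = some π := by
    rw [← planner_t1_eq_of_isAnonymized hA ht4, planner_t1_eq_of_isAnonymized hA ht2, hout2]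
  obtain ⟨hπ, ht2π⟩ := feasible_D3_iff.1 (hA _ _ _ _ hout2)
  have ht4π := (feasible_D3_iff.1 (hA _ _ _ _ hout4)).2
  rcases hπ with rfl | rfl <;> simp [pathA, pathB] at ht2π ht4π
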